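/- Let q \in (0,1] and \alpha \in (0,1), and define T(w) = q(1-\alpha)w^2 + 1 - q for w \in [0,1]. Then the fixed points of T in \mathbb{R} are (1 \pm \sqrt{1 - 4q(1-q)(1-\alpha)})/(2q(1-\alpha)); writing \bar{W} = (1 - \sqrt{1 - 4q(1-q)(1-\alpha)})/(2q(1-\alpha)) for the smaller one, we have \bar{W} \in [0,1], q(1+\bar{W}) \le 1, and |T(w) - \bar{W}| \le (1-\alpha)|w - \bar{W}| for every w \in [0,1]. Consequently, every sequence (W_k) with W_0 \in [0,1] and W_{k+1} = T(W_k) satisfies |W_k - \bar{W}| \le 2(1-\alpha)^k for all k \in \mathbb{N}. -/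

import Mathlib

/-- The quadratic map `T(w) = q(1-α)w² + 1 - q` arising from the Galton-Watson recursion. -/
noncomputable def T (q α w : ℝ) : ℝ := q * (1 - α) * w ^ 2 + 1 - q

/-- The smaller fixed point `W̄` of `T`. -/
noncomputable def Wbar (q α : ℝ) : ℝ :=
  (1 - Real.sqrt (1 - 4 * q * (1 - q) * (1 - α))) / (2 * q * (1 - α))

/-!
`T w - w` is a quadratic with discriminant `1 - 4q(1-q)(1-α)`, which exceeds `(2q-1)²` by
`4q(1-q)α ≥ 0`; so its square root `s` satisfies `|2q - 1| ≤ s`. Rationalising,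
`W̄ = 2(1-q)/(1+s)`, and `|2q - 1| ≤ s` gives both `W̄ ≤ 1` and `q(1 + W̄) ≤ 1`.
Since `T w - T v = q(1-α)(w+v)(w-v)`, on `[0,1]` the map `T` contracts towards its fixed point
`W̄` with factor `q(1-α)(1 + W̄) ≤ 1 - α`, and iterating the contraction gives the geometric bound.
-/

open Set

theorem dist_le_pow_mul_of_contracts_toward {X : Type*} [PseudoMetricSpace X] {f : X → X}
    {s : Set X} {x : X} {K : ℝ} (hK : 0 ≤ K) (hf : MapsTo f s s)
    (hcontr : ∀ w ∈ s, dist (f w) x ≤ K * dist w x) {u : ℕ → X} (hu₀ : u 0 ∈ s)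
    (hu : ∀ k, u (k + 1) = f (u k)) (k : ℕ) : dist (u k) x ≤ K ^ k * dist (u 0) x := by
  have hmem : ∀ k, u k ∈ s := fun k => Nat.rec hu₀ (fun k ih => hu k ▸ hf ih) k
  induction k with
  | zero => simp
  | succ k ih =>
    calc dist (u (k + 1)) x ≤ K * dist (u k) x := hu k ▸ hcontr _ (hmem k)
      _ ≤ K * (K ^ k * dist (u 0) x) := mul_le_mul_of_nonneg_left ih hK
      _ = K ^ (k + 1) * dist (u 0) x := by ring

section

variable {q α : ℝ}

theorem sq_two_mul_sub_one_le_discrim (hq₀ : 0 ≤ q) (hq₁ : q ≤ 1) (hα₀ : 0 ≤ α) :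
    (2 * q - 1) ^ 2 ≤ 1 - 4 * q * (1 - q) * (1 - α) := by
  nlinarith [mul_nonneg (mul_nonneg hq₀ (sub_nonneg.2 hq₁)) hα₀]

theorem abs_two_mul_sub_one_le_sqrt_discrim (hq₀ : 0 ≤ q) (hq₁ : q ≤ 1) (hα₀ : 0 ≤ α) :
    |2 * q - 1| ≤ Real.sqrt (1 - 4 * q * (1 - q) * (1 - α)) :=
  Real.abs_le_sqrt (sq_two_mul_sub_one_le_discrim hq₀ hq₁ hα₀)

theorem discrim_nonneg (hq₀ : 0 ≤ q) (hq₁ : q ≤ 1) (hα₀ : 0 ≤ α) :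
    0 ≤ 1 - 4 * q * (1 - q) * (1 - α) :=
  (sq_nonneg _).trans (sq_two_mul_sub_one_le_discrim hq₀ hq₁ hα₀)

theorem T_eq_self_iff (hq : q ≠ 0) (hα : α ≠ 1) (hD : 0 ≤ 1 - 4 * q * (1 - q) * (1 - α))
    (w : ℝ) :
    T q α w = w ↔
      w = Wbar q α ∨
      w = (1 + Real.sqrt (1 - 4 * q * (1 - q) * (1 - α))) / (2 * q * (1 - α)) := by
  have ha : q * (1 - α) ≠ 0 := mul_ne_zero hq (sub_ne_zero.2 (Ne.symm hα))
  have hdisc : discrim (q * (1 - α)) (-1) (1 - q) =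
      Real.sqrt (1 - 4 * q * (1 - q) * (1 - α)) * Real.sqrt (1 - 4 * q * (1 - q) * (1 - α)) := by
    rw [Real.mul_self_sqrt hD, discrim]
    ring
  have hquad : T q α w = w ↔ q * (1 - α) * (w * w) + -1 * w + (1 - q) = 0 := by
    rw [T, ← sub_eq_zero]
    ring_nf
  rw [hquad, quadratic_eq_zero_iff ha hdisc, Wbar, ← mul_assoc, neg_neg, or_comm]

theorem Wbar_eq (hq : q ≠ 0) (hα : α ≠ 1) (hD : 0 ≤ 1 - 4 * q * (1 - q) * (1 - α)) :
    Wbar q α = 2 * (1 - q) / (1 + Real.sqrt (1 - 4 * q * (1 - q) * (1 - α))) := by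
  have hs := Real.sqrt_nonneg (1 - 4 * q * (1 - q) * (1 - α))
  have h2a : 2 * q * (1 - α) ≠ 0 := by
    have := sub_ne_zero.2 (Ne.symm hα)
    positivity
  rw [Wbar, div_eq_div_iff h2a (by positivity)]
  linear_combination (-1 : ℝ) * Real.mul_self_sqrt hD

variable (hq₀ : 0 < q) (hq₁ : q ≤ 1) (hα₀ : 0 ≤ α) (hα₁ : α < 1)
include hq₀ hq₁ hα₀ hα₁

theorem Wbar_nonneg : 0 ≤ Wbar q α := by
  rw [Wbar_eq hq₀.ne' hα₁.ne (discrim_nonneg hq₀.le hq₁ hα₀)]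
  have := sub_nonneg.2 hq₁
  positivity

theorem Wbar_le_one : Wbar q α ≤ 1 := by
  have hs := abs_two_mul_sub_one_le_sqrt_discrim hq₀.le hq₁ hα₀
  rw [Wbar_eq hq₀.ne' hα₁.ne (discrim_nonneg hq₀.le hq₁ hα₀),
    div_le_one (by positivity)]
  linarith [neg_abs_le (2 * q - 1)]

theorem mul_one_add_Wbar_le_one : q * (1 + Wbar q α) ≤ 1 := by
  have hs := abs_two_mul_sub_one_le_sqrt_discrim hq₀.le hq₁ hα₀
  have hpos : 0 < 1 + Real.sqrt (1 - 4 * q * (1 - q) * (1 - α)) := by positivity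
  have hW : q * Wbar q α ≤ 1 - q := by
    rw [Wbar_eq hq₀.ne' hα₁.ne (discrim_nonneg hq₀.le hq₁ hα₀), mul_div_assoc',
      div_le_iff₀ hpos]
    nlinarith [le_abs_self (2 * q - 1), sub_nonneg.2 hq₁]
  linarith

end

theorem T_sub_T (q α w v : ℝ) : T q α w - T q α v = q * (1 - α) * (w + v) * (w - v) := by
  rw [T, T]
  ring

section

variable {q α : ℝ} (hq₀ : 0 < q) (hq₁ : q ≤ 1) (hα₀ : 0 ≤ α) (hα₁ : α < 1)
include hq₀ hq₁ hα₀ hα₁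

theorem T_Wbar : T q α (Wbar q α) = Wbar q α :=
  (T_eq_self_iff hq₀.ne' hα₁.ne (discrim_nonneg hq₀.le hq₁ hα₀) _).2 (Or.inl rfl)

theorem abs_T_sub_Wbar_le {w : ℝ} (hw : w ∈ Icc (0 : ℝ) 1) :
    |T q α w - Wbar q α| ≤ (1 - α) * |w - Wbar q α| := by
  have hW₀ := Wbar_nonneg hq₀ hq₁ hα₀ hα₁
  have hc : 0 ≤ q * (1 - α) := mul_nonneg hq₀.le (sub_nonneg.2 hα₁.le)
  have hfactor : q * (1 - α) * (w + Wbar q α) ≤ 1 - α :=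
    calc q * (1 - α) * (w + Wbar q α) ≤ q * (1 - α) * (1 + Wbar q α) := by
          gcongr
          exact hw.2
      _ = (1 - α) * (q * (1 + Wbar q α)) := by ring
      _ ≤ (1 - α) * 1 :=
          mul_le_mul_of_nonneg_left (mul_one_add_Wbar_le_one hq₀ hq₁ hα₀ hα₁) (by linarith)
      _ = 1 - α := mul_one _
  conv_lhs => rw [← T_Wbar hq₀ hq₁ hα₀ hα₁, T_sub_T, abs_mul,
    abs_of_nonneg (mul_nonneg hc (add_nonneg hw.1 hW₀))]
  exact mul_le_mul_of_nonneg_right hfactor (abs_nonneg _)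

end

theorem T_mapsTo_Icc {q α : ℝ} (hq₀ : 0 ≤ q) (hq₁ : q ≤ 1) (hα₀ : 0 ≤ α) (hα₁ : α ≤ 1) :
    MapsTo (T q α) (Icc 0 1) (Icc 0 1) := by
  rintro w ⟨hw₀, hw₁⟩
  have hw2 : w ^ 2 ≤ 1 := pow_le_one₀ hw₀ hw₁
  have hc : 0 ≤ q * (1 - α) := mul_nonneg hq₀ (sub_nonneg.2 hα₁)
  constructor
  · rw [T]
    nlinarith [mul_nonneg hc (sq_nonneg w)]
  · rw [T]
    nlinarith [mul_le_mul_of_nonneg_left hw2 hc]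

theorem stmt19 (q α : ℝ) (hq : q ∈ Set.Ioc (0 : ℝ) 1) (hα : α ∈ Set.Ioo (0 : ℝ) 1) :
    -- the fixed points of T in ℝ are (1 ± √(1 - 4q(1-q)(1-α)))/(2q(1-α))
    (∀ w : ℝ, T q α w = w ↔
      w = Wbar q α ∨
      w = (1 + Real.sqrt (1 - 4 * q * (1 - q) * (1 - α))) / (2 * q * (1 - α))) ∧
    Wbar q α ∈ Set.Icc (0 : ℝ) 1 ∧
    q * (1 + Wbar q α) ≤ 1 ∧
    (∀ w ∈ Set.Icc (0 : ℝ) 1, |T q α w - Wbar q α| ≤ (1 - α) * |w - Wbar q α|) ∧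
    (∀ W : ℕ → ℝ, W 0 ∈ Set.Icc (0 : ℝ) 1 → (∀ k, W (k + 1) = T q α (W k)) →
      ∀ k : ℕ, |W k - Wbar q α| ≤ 2 * (1 - α) ^ k) := by
  obtain ⟨hq₀, hq₁⟩ := hq
  obtain ⟨hα₀, hα₁⟩ := hα
  have hWbar : Wbar q α ∈ Icc (0 : ℝ) 1 :=
    ⟨Wbar_nonneg hq₀ hq₁ hα₀.le hα₁, Wbar_le_one hq₀ hq₁ hα₀.le hα₁⟩
  have hcontr := fun w (hw : w ∈ Icc (0 : ℝ) 1) => abs_T_sub_Wbar_le hq₀ hq₁ hα₀.le hα₁ hw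
  refine ⟨T_eq_self_iff hq₀.ne' hα₁.ne (discrim_nonneg hq₀.le hq₁ hα₀.le), hWbar,
    mul_one_add_Wbar_le_one hq₀ hq₁ hα₀.le hα₁, hcontr, fun W hW₀ hW k => ?_⟩
  have hgeom := dist_le_pow_mul_of_contracts_toward (sub_nonneg.2 hα₁.le)
    (T_mapsTo_Icc hq₀.le hq₁ hα₀.le hα₁.le)
    (by simpa only [Real.dist_eq] using hcontr) hW₀ hW k
  calc |W k - Wbar q α| = dist (W k) (Wbar q α) := (Real.dist_eq _ _).symm
    _ ≤ (1 - α) ^ k * 1 := hgeom.trans <| mul_le_mul_of_nonneg_left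
        (Real.dist_le_of_mem_Icc_01 hW₀ hWbar) (pow_nonneg (sub_nonneg.2 hα₁.le) k)
    _ ≤ 2 * (1 - α) ^ k := by nlinarith [pow_nonneg (sub_nonneg.2 hα₁.le) k]
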